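/- arXiv:2501.01199 — 3 statements merged into one kernel-verified Lean document; each statement's English description precedes it below -/
import Mathlib

section
/- Let n ∈ ℕ, ν > −1, and let x ∈ ℝ be such that x is not an integer multiple of 2π. Then as n → ∞, Ψ_ν^C(x,n) = −(sin((n+1/2)x)/(2 sin(x/2))) · n^{−ν−1} + O(n^{−ν−2}); i.e., the quantity Ψ_ν^C(x,n) + (sin((n+1/2)x)/(2 sin(x/2))) n^{−ν−1} is O(n^{−ν−2}) as n → ∞. -/
/-!
Summation by parts twice. With `s = sin (x / 2) ≠ 0`, the bounded sequence
`b k = -sin ((k - 1/2) x) / (2 s)` satisfies `b k - b (k+1) = cos (k x)`, and the bounded sequence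
`w k = -cos ((k - 1) x) / (4 s²)` satisfies `w k - w (k+1) = b k`. One summation by parts
gives `Ψ n = b (n+1) (n+1)^{-ν-1} + ∑_{k>n} b (k+1) ((k+1)^{-ν-1} - k^{-ν-1})`, and a second
one, using that the differences of `k^{-ν-1}` are nonnegative and decreasing, bounds the tail sum
by a multiple of such a difference, which is `O(n^{-ν-2})` by the mean value theorem.
-/

open Real Filter Asymptotics Finset Topology

theorem sum_Ioc_sub_mul_eq {R : Type*} [CommRing R] (u c : ℕ → R) {n N : ℕ} (hN : n ≤ N) :
    ∑ k ∈ Ioc n N, (u k - u (k + 1)) * c k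
      = u (n + 1) * c (n + 1) - u (N + 1) * c (N + 1)
        + ∑ k ∈ Ioc n N, u (k + 1) * (c (k + 1) - c k) := by
  induction N, hN using Nat.le_induction with
  | base => simp
  | succ N hN ih =>
    rw [sum_Ioc_succ_top (by omega), sum_Ioc_succ_top (by omega), ih]
    ring

theorem sum_Ioc_sub_succ_eq {R : Type*} [CommRing R] (c : ℕ → R) {n N : ℕ} (hN : n ≤ N) :
    ∑ k ∈ Ioc n N, (c k - c (k + 1)) = c (n + 1) - c (N + 1) := by
  simpa using sum_Ioc_sub_mul_eq c (fun _ => 1) hN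

theorem abs_sum_Ioc_sub_mul_le {u c : ℕ → ℝ} {M : ℝ} {n N : ℕ} (hN : n ≤ N)
    (hu : ∀ k, n < k → |u k| ≤ M) (hc : ∀ k, n < k → 0 ≤ c k)
    (hc_anti : ∀ k, n < k → c (k + 1) ≤ c k) :
    |∑ k ∈ Ioc n N, (u k - u (k + 1)) * c k| ≤ 2 * M * c (n + 1) := by
  have hbound : ∀ k, n < k → |u k * c k| ≤ M * c k := fun k hk => by
    rw [abs_mul, abs_of_nonneg (hc k hk)]
    exact mul_le_mul_of_nonneg_right (hu k hk) (hc k hk)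
  have hsum : |∑ k ∈ Ioc n N, u (k + 1) * (c (k + 1) - c k)| ≤ M * (c (n + 1) - c (N + 1)) :=
    calc |∑ k ∈ Ioc n N, u (k + 1) * (c (k + 1) - c k)|
        ≤ ∑ k ∈ Ioc n N, |u (k + 1) * (c (k + 1) - c k)| := abs_sum_le_sum_abs _ _
      _ ≤ ∑ k ∈ Ioc n N, M * (c k - c (k + 1)) := by
        refine sum_le_sum fun k hk => ?_
        have hk : n < k := (mem_Ioc.1 hk).1
        rw [abs_mul, abs_sub_comm, abs_of_nonneg (sub_nonneg.2 (hc_anti k hk))]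
        exact mul_le_mul_of_nonneg_right (hu _ (by omega)) (sub_nonneg.2 (hc_anti k hk))
      _ = M * (c (n + 1) - c (N + 1)) := by rw [← mul_sum, sum_Ioc_sub_succ_eq c hN]
  rw [sum_Ioc_sub_mul_eq u c hN]
  calc _ ≤ |u (n + 1) * c (n + 1) - u (N + 1) * c (N + 1)|
        + |∑ k ∈ Ioc n N, u (k + 1) * (c (k + 1) - c k)| := abs_add_le _ _
    _ ≤ |u (n + 1) * c (n + 1)| + |u (N + 1) * c (N + 1)|
        + |∑ k ∈ Ioc n N, u (k + 1) * (c (k + 1) - c k)| := by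
        gcongr; exact abs_sub _ _
    _ ≤ M * c (n + 1) + M * c (N + 1) + M * (c (n + 1) - c (N + 1)) := by
        gcongr
        exacts [hbound _ (by omega), hbound _ (by omega)]
    _ = 2 * M * c (n + 1) := by ring

theorem abs_sub_le_of_tendsto_sum_Ioc {u w c : ℕ → ℝ} {M M' S : ℝ} {n : ℕ}
    (hu_eq : ∀ k, u k = w k - w (k + 1)) (hu : ∀ k, |u k| ≤ M) (hw : ∀ k, |w k| ≤ M')
    (hc : Tendsto c atTop (𝓝 0)) (hc_anti : ∀ k, n ≤ k → c (k + 1) ≤ c k)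
    (hc_convex : ∀ k, n ≤ k → c (k + 1) - c (k + 2) ≤ c k - c (k + 1))
    (hS : Tendsto (fun N => ∑ k ∈ Ioc n N, (u k - u (k + 1)) * c k) atTop (𝓝 S)) :
    |S - u (n + 1) * c n| ≤ (2 * M' + M) * (c n - c (n + 1)) := by
  have hrem : ∀ N, n ≤ N → |∑ k ∈ Ioc n N, u (k + 1) * (c (k + 1) - c k)|
      ≤ 2 * M' * (c (n + 1) - c (n + 2)) := fun N hN => by
    have := abs_sum_Ioc_sub_mul_le (u := fun k => w (k + 1)) (c := fun k => c k - c (k + 1))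
      (M := M') hN (fun k _ => hw _) (fun k hk => sub_nonneg.2 (hc_anti k hk.le))
      (fun k hk => hc_convex k hk.le)
    rw [← abs_neg, ← sum_neg_distrib]
    convert this using 3 with k
    rw [hu_eq]
    ring
  have hboundary : Tendsto (fun N => u (N + 1) * c (N + 1)) atTop (𝓝 0) :=
    isBoundedUnder_le_mul_tendsto_zero (isBoundedUnder_of ⟨M, fun k => hu (k + 1)⟩)
      (hc.comp (tendsto_add_atTop_nat 1))
  have hfirst : |S - u (n + 1) * c (n + 1)| ≤ 2 * M' * (c (n + 1) - c (n + 2)) := by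
    refine le_of_tendsto (by simpa only [add_zero] using ((hS.sub_const _).add hboundary).abs) ?_
    filter_upwards [eventually_ge_atTop n] with N hN
    rw [sum_Ioc_sub_mul_eq u c hN]
    exact (hrem N hN).trans_eq' (by congr 1; ring)
  have hd : 0 ≤ c n - c (n + 1) := sub_nonneg.2 (hc_anti n le_rfl)
  have hM' : 0 ≤ M' := (abs_nonneg _).trans (hw 0)
  calc |S - u (n + 1) * c n|
      = |(S - u (n + 1) * c (n + 1)) - u (n + 1) * (c n - c (n + 1))| := by congr 1; ring
    _ ≤ |S - u (n + 1) * c (n + 1)| + |u (n + 1)| * (c n - c (n + 1)) :=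
        (abs_sub _ _).trans_eq (by rw [abs_mul, abs_of_nonneg hd])
    _ ≤ 2 * M' * (c n - c (n + 1)) + M * (c n - c (n + 1)) := by
        gcongr
        exacts [hfirst.trans (mul_le_mul_of_nonneg_left (hc_convex n le_rfl) (by positivity)),
          hu _]
    _ = (2 * M' + M) * (c n - c (n + 1)) := by ring

theorem exists_rpow_neg_sub_rpow_neg_eq (p : ℝ) {a : ℝ} (ha : 0 < a) :
    ∃ t ∈ Set.Ioo a (a + 1), a ^ (-p) - (a + 1) ^ (-p) = p * t ^ (-p - 1) := by
  obtain ⟨t, ht, heq⟩ := exists_hasDerivAt_eq_slope (fun t : ℝ => t ^ (-p))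
    (fun t => -p * t ^ (-p - 1)) (lt_add_one a)
    (fun t ht => (continuousAt_rpow_const t (-p) (.inl (ha.trans_le ht.1).ne')).continuousWithinAt)
    (fun t ht => hasDerivAt_rpow_const (.inl (ha.trans ht.1).ne'))
  refine ⟨t, ht, ?_⟩
  rw [add_sub_cancel_left, div_one] at heq
  linarith

theorem rpow_neg_sub_rpow_neg_le {p a : ℝ} (hp : 0 ≤ p) (ha : 0 < a) :
    a ^ (-p) - (a + 1) ^ (-p) ≤ p * a ^ (-p - 1) := by
  obtain ⟨t, ht, heq⟩ := exists_rpow_neg_sub_rpow_neg_eq p ha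
  rw [heq]
  exact mul_le_mul_of_nonneg_left (rpow_le_rpow_of_nonpos ha ht.1.le (by linarith)) hp

theorem mul_rpow_le_rpow_neg_sub_rpow_neg {p a : ℝ} (hp : 0 ≤ p) (ha : 0 < a) :
    p * (a + 1) ^ (-p - 1) ≤ a ^ (-p) - (a + 1) ^ (-p) := by
  obtain ⟨t, ht, heq⟩ := exists_rpow_neg_sub_rpow_neg_eq p ha
  rw [heq]
  exact mul_le_mul_of_nonneg_left
    (rpow_le_rpow_of_nonpos (ha.trans ht.1) ht.2.le (by linarith)) hp

theorem natCast_succ_rpow_neg_le {p : ℝ} (hp : 0 ≤ p) {k : ℕ} (hk : 1 ≤ k) :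
    ((k + 1 : ℕ) : ℝ) ^ (-p) ≤ (k : ℝ) ^ (-p) := by
  push_cast
  exact rpow_le_rpow_of_nonpos (by exact_mod_cast hk) (le_add_of_nonneg_right zero_le_one)
    (by linarith)

theorem natCast_rpow_neg_sub_succ_le {p : ℝ} (hp : 0 ≤ p) {k : ℕ} (hk : 1 ≤ k) :
    (k : ℝ) ^ (-p) - ((k + 1 : ℕ) : ℝ) ^ (-p) ≤ p * (k : ℝ) ^ (-p - 1) := by
  push_cast
  exact rpow_neg_sub_rpow_neg_le hp (by exact_mod_cast hk)

theorem natCast_rpow_neg_sub_succ_antitone {p : ℝ} (hp : 0 ≤ p) {k : ℕ} (hk : 1 ≤ k) :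
    ((k + 1 : ℕ) : ℝ) ^ (-p) - ((k + 2 : ℕ) : ℝ) ^ (-p)
      ≤ (k : ℝ) ^ (-p) - ((k + 1 : ℕ) : ℝ) ^ (-p) := by
  have hk' : (0 : ℝ) < k := by exact_mod_cast hk
  push_cast
  rw [show (k : ℝ) + 2 = k + 1 + 1 by ring]
  exact (rpow_neg_sub_rpow_neg_le hp (by positivity)).trans
    (mul_rpow_le_rpow_neg_sub_rpow_neg hp hk')

section CosPrimitive

variable {x : ℝ}

noncomputable def cosPrimitive (x : ℝ) (k : ℕ) : ℝ := -sin ((k - 1 / 2) * x) / (2 * sin (x / 2))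

noncomputable def cosPrimitive₂ (x : ℝ) (k : ℕ) : ℝ := -cos ((k - 1) * x) / (4 * sin (x / 2) ^ 2)

theorem sin_half_ne_zero (hx : ∀ j : ℤ, x ≠ 2 * π * j) : sin (x / 2) ≠ 0 := fun h => by
  obtain ⟨j, hj⟩ := sin_eq_zero_iff.1 h
  exact hx j (by linarith)

theorem cosPrimitive_sub_succ (hx : sin (x / 2) ≠ 0) (k : ℕ) :
    cosPrimitive x k - cosPrimitive x (k + 1) = cos (k * x) := by
  have h := sin_sub_sin (((k : ℝ) + 1 / 2) * x) (((k : ℝ) - 1 / 2) * x)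
  rw [show (((k : ℝ) + 1 / 2) * x - ((k : ℝ) - 1 / 2) * x) / 2 = x / 2 by ring,
    show (((k : ℝ) + 1 / 2) * x + ((k : ℝ) - 1 / 2) * x) / 2 = k * x by ring] at h
  simp only [cosPrimitive]
  push_cast
  rw [show (k : ℝ) + 1 - 1 / 2 = k + 1 / 2 by ring, div_sub_div_same,
    div_eq_iff (mul_ne_zero two_ne_zero hx)]
  linear_combination h

theorem cosPrimitive₂_sub_succ (hx : sin (x / 2) ≠ 0) (k : ℕ) :
    cosPrimitive₂ x k - cosPrimitive₂ x (k + 1) = cosPrimitive x k := by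
  have h := cos_sub_cos (((k : ℝ) - 1) * x) (k * x)
  rw [show (((k : ℝ) - 1) * x + k * x) / 2 = ((k : ℝ) - 1 / 2) * x by ring,
    show (((k : ℝ) - 1) * x - k * x) / 2 = -(x / 2) by ring, sin_neg] at h
  simp only [cosPrimitive₂, cosPrimitive]
  push_cast
  rw [show (k : ℝ) + 1 - 1 = k by ring, div_sub_div_same,
    div_eq_div_iff (by positivity) (mul_ne_zero two_ne_zero hx)]
  linear_combination (-2 * sin (x / 2)) * h

theorem abs_cosPrimitive_le (x : ℝ) (k : ℕ) : |cosPrimitive x k| ≤ 1 / (2 * |sin (x / 2)|) := by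
  rw [cosPrimitive, abs_div, abs_neg, abs_mul, abs_two]
  gcongr
  exact abs_sin_le_one _

theorem abs_cosPrimitive₂_le (x : ℝ) (k : ℕ) :
    |cosPrimitive₂ x k| ≤ 1 / (4 * sin (x / 2) ^ 2) := by
  rw [cosPrimitive₂, abs_div, abs_neg, abs_of_nonneg (by positivity : 0 ≤ 4 * sin (x / 2) ^ 2)]
  gcongr
  exact abs_cos_le_one _

theorem cosPrimitive_succ (x : ℝ) (n : ℕ) :
    cosPrimitive x (n + 1) = -(sin ((n + 1 / 2) * x) / (2 * sin (x / 2))) := by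
  rw [cosPrimitive, neg_div]
  push_cast
  ring_nf

end CosPrimitive

/-- If `Ψ n` is the limit of the partial sums `∑_{k=n+1}^N cos(kx)/k^{ν+1}`
(i.e. `Ψ n = Ψ_ν^C(x,n)`), with `ν > -1` and `x` not an integer multiple of `2π`, then
`Ψ n + (sin((n+1/2)x)/(2 sin(x/2))) n^{-ν-1} = O(n^{-ν-2})` as `n → ∞`. -/
theorem stmt_0 (ν x : ℝ) (hν : ν > -1) (hx : ∀ j : ℤ, x ≠ 2 * Real.pi * j)
    (Ψ : ℕ → ℝ)
    (hΨ : ∀ n : ℕ, Filter.Tendsto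
      (fun N : ℕ => ∑ k ∈ Finset.Icc (n + 1) N, Real.cos (k * x) / (k : ℝ) ^ (ν + 1))
      Filter.atTop (nhds (Ψ n))) :
    (fun n : ℕ => Ψ n + Real.sin ((n + 1 / 2) * x) / (2 * Real.sin (x / 2)) * (n : ℝ) ^ (-ν - 1))
      =O[Filter.atTop] (fun n : ℕ => (n : ℝ) ^ (-ν - 2)) := by
  have hp : 0 < ν + 1 := by linarith
  have hs := sin_half_ne_zero hx
  set f : ℕ → ℝ := fun k => (k : ℝ) ^ (-(ν + 1))
  set C := 2 * (1 / (4 * sin (x / 2) ^ 2)) + 1 / (2 * |sin (x / 2)|)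
  have key (n : ℕ) (hn : 1 ≤ n) : |Ψ n - cosPrimitive x (n + 1) * f n| ≤ C * (f n - f (n + 1)) := by
    refine abs_sub_le_of_tendsto_sum_Ioc (fun k => (cosPrimitive₂_sub_succ hs k).symm)
      (abs_cosPrimitive_le x) (abs_cosPrimitive₂_le x)
      ((tendsto_rpow_neg_atTop hp).comp tendsto_natCast_atTop_atTop)
      (fun k hk => natCast_succ_rpow_neg_le hp.le (hn.trans hk))
      (fun k hk => natCast_rpow_neg_sub_succ_antitone hp.le (hn.trans hk)) ?_
    refine (hΨ n).congr fun N => ?_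
    rw [Icc_add_one_left_eq_Ioc]
    refine sum_congr rfl fun k _ => ?_
    rw [cosPrimitive_sub_succ hs, div_eq_mul_inv, ← rpow_neg (Nat.cast_nonneg k)]
  refine isBigO_iff.2 ⟨C * (ν + 1), ?_⟩
  filter_upwards [eventually_ge_atTop 1] with n hn
  rw [norm_of_nonneg (rpow_nonneg n.cast_nonneg _), norm_eq_abs]
  calc _ = |Ψ n - cosPrimitive x (n + 1) * f n| := by
        rw [cosPrimitive_succ, show -ν - 1 = -(ν + 1) by ring]
        simp only [f]
        congr 1
        ring
    _ ≤ C * (f n - f (n + 1)) := key n hn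
    _ ≤ C * ((ν + 1) * (n : ℝ) ^ (-(ν + 1) - 1)) := by
        gcongr; exact natCast_rpow_neg_sub_succ_le hp.le hn
    _ = C * (ν + 1) * (n : ℝ) ^ (-ν - 2) := by ring_nf
end

section
/- Let n ∈ ℕ, ν > −1, and let x ∈ ℝ be such that x is not an integer multiple of 2π. Then as n → ∞, Ψ_ν^S(x,n) = (cos((n+1/2)x)/(2 sin(x/2))) · n^{−ν−1} + O(n^{−ν−2}); i.e., the quantity Ψ_ν^S(x,n) − (cos((n+1/2)x)/(2 sin(x/2))) n^{−ν−1} is O(n^{−ν−2}) as n → ∞. -/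
open Real Filter Topology Asymptotics Finset

/-!
Write `b k = k^(-ν-1)` and `d k = b k - b (k+1)`. Since
`2 sin(x/2) sin(kx) = cos((k-1/2)x) - cos((k+1/2)x)`, Abel summation turns `2 sin(x/2) Ψ(x,n)`
into `cos((n+1/2)x) b (n+1) - ∑_{k>n} cos((k+1/2)x) d k`, and `b (n+1)` differs from `b n` by
`d n = O(n^(-ν-2))`. Since `2 sin(x/2) cos((k+1/2)x) = sin((k+1)x) - sin(kx)`, the partial sums
of `cos((k+1/2)x)` are bounded by `1/|sin(x/2)|`; as `d` is decreasing (convexity of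
`t^(-ν-1)`), a second Abel summation bounds the remaining series by
`d (n+1) / |sin(x/2)| = O(n^(-ν-2))`.
-/

theorem Finset.sum_Ico_sub_mul_eq {R : Type*} [CommRing R] (f g : ℕ → R) {m N : ℕ} (hmN : m ≤ N) :
    ∑ k ∈ Ico m N, (f (k + 1) - f k) * g k
      = f N * g N - f m * g m - ∑ k ∈ Ico m N, f (k + 1) * (g (k + 1) - g k) := by
  have h (k : ℕ) : (f (k + 1) - f k) * g k
      = (f (k + 1) * g (k + 1) - f k * g k) - f (k + 1) * (g (k + 1) - g k) := by ring
  rw [sum_congr rfl fun k _ => h k, sum_sub_distrib, sum_Ico_sub (fun k => f k * g k) hmN]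

theorem Finset.abs_sum_Ico_sub_mul_le {f g : ℕ → ℝ} {B : ℝ} (hf : ∀ k, |f k| ≤ B) {m N : ℕ}
    (hmN : m ≤ N) (hg : AntitoneOn g (Set.Ici m)) (hg0 : 0 ≤ g N) :
    |∑ k ∈ Ico m N, (f (k + 1) - f k) * g k| ≤ 2 * B * g m := by
  have hgm : 0 ≤ g m := hg0.trans (hg Set.self_mem_Ici hmN hmN)
  have hterm (k : ℕ) (hk : k ∈ Ico m N) :
      |f (k + 1) * (g (k + 1) - g k)| ≤ B * (g k - g (k + 1)) := by
    have hk := (mem_Ico.1 hk).1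
    have hstep : 0 ≤ g k - g (k + 1) := sub_nonneg.2 (hg hk (Set.mem_Ici.2 (by omega)) (by omega))
    rw [abs_mul, abs_sub_comm, abs_of_nonneg hstep]
    exact mul_le_mul_of_nonneg_right (hf _) hstep
  have htel : ∑ k ∈ Ico m N, (g k - g (k + 1)) = g m - g N := by
    rw [← neg_inj, ← sum_neg_distrib]
    simpa using sum_Ico_sub g hmN
  have hsum : |∑ k ∈ Ico m N, f (k + 1) * (g (k + 1) - g k)| ≤ B * (g m - g N) := calc
    _ ≤ ∑ k ∈ Ico m N, B * (g k - g (k + 1)) := (abs_sum_le_sum_abs _ _).trans (sum_le_sum hterm)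
    _ = B * (g m - g N) := by rw [← mul_sum, htel]
  have hN : |f N * g N| ≤ B * g N := by
    rw [abs_mul, abs_of_nonneg hg0]; exact mul_le_mul_of_nonneg_right (hf N) hg0
  have hm : |f m * g m| ≤ B * g m := by
    rw [abs_mul, abs_of_nonneg hgm]; exact mul_le_mul_of_nonneg_right (hf m) hgm
  rw [sum_Ico_sub_mul_eq f g hmN]
  calc _ ≤ |f N * g N| + |f m * g m| + |∑ k ∈ Ico m N, f (k + 1) * (g (k + 1) - g k)| :=
        (abs_sub _ _).trans (add_le_add_left (abs_sub _ _) _)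
    _ ≤ 2 * B * g m := by linarith

namespace Real

theorem exists_rpow_neg_sub_rpow_neg_add_one_eq (p : ℝ) {a : ℝ} (ha : 0 < a) :
    ∃ c ∈ Set.Ioo a (a + 1), a ^ (-p) - (a + 1) ^ (-p) = p * c ^ (-p - 1) := by
  obtain ⟨c, hc, hslope⟩ := exists_hasDerivAt_eq_slope (fun t => t ^ (-p))
    (fun t => -p * t ^ (-p - 1)) (lt_add_one a)
    (continuousOn_id.rpow_const fun t ht => Or.inl (ha.trans_le ht.1).ne')
    (fun t ht => hasDerivAt_rpow_const (Or.inl (ha.trans ht.1).ne'))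
  refine ⟨c, hc, ?_⟩
  rw [add_sub_cancel_left, div_one] at hslope
  linarith

theorem rpow_neg_sub_rpow_neg_add_one_le {p : ℝ} (hp : 0 ≤ p) {a : ℝ} (ha : 0 < a) :
    a ^ (-p) - (a + 1) ^ (-p) ≤ p * a ^ (-p - 1) := by
  obtain ⟨c, hc, heq⟩ := exists_rpow_neg_sub_rpow_neg_add_one_eq p ha
  rw [heq]
  exact mul_le_mul_of_nonneg_left (rpow_le_rpow_of_nonpos ha hc.1.le (by linarith)) hp

theorem rpow_neg_sub_rpow_neg_add_one_nonneg {p : ℝ} (hp : 0 ≤ p) {a : ℝ} (ha : 0 < a) :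
    0 ≤ a ^ (-p) - (a + 1) ^ (-p) :=
  sub_nonneg.2 (rpow_le_rpow_of_nonpos ha (lt_add_one a).le (by linarith))

theorem antitoneOn_natCast_rpow_neg_sub_rpow_neg_succ {p : ℝ} (hp : 0 ≤ p) :
    AntitoneOn (fun k : ℕ => (k : ℝ) ^ (-p) - ((k + 1 : ℕ) : ℝ) ^ (-p)) (Set.Ici 1) := by
  refine antitoneOn_nat_Ici_of_succ_le fun k hk => ?_
  have hk0 : (0 : ℝ) < k := by exact_mod_cast hk
  obtain ⟨c, hc, heq⟩ := exists_rpow_neg_sub_rpow_neg_add_one_eq p hk0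
  obtain ⟨c', hc', heq'⟩ := exists_rpow_neg_sub_rpow_neg_add_one_eq p (hk0.trans (lt_add_one _))
  push_cast
  rw [heq, heq']
  exact mul_le_mul_of_nonneg_left
    (rpow_le_rpow_of_nonpos (hk0.trans hc.1) (hc.2.trans hc'.1).le (by linarith)) hp

end Real

theorem two_mul_sin_half_mul_sum_Ico_sin_mul (x : ℝ) (b : ℕ → ℝ) {m N : ℕ} (hmN : m ≤ N) :
    2 * sin (x / 2) * ∑ k ∈ Ico m N, sin (k * x) * b k
      = cos ((m - 1 / 2) * x) * b m - cos ((N - 1 / 2) * x) * b N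
        - ∑ k ∈ Ico m N, cos ((k + 1 / 2) * x) * (b k - b (k + 1)) := by
  have hsin (k : ℕ) : 2 * sin (x / 2) * sin (k * x)
      = -cos ((↑(k + 1) - 1 / 2) * x) - -cos ((k - 1 / 2) * x) := by
    rw [two_mul_sin_mul_sin, ← cos_neg]
    push_cast
    ring_nf
  simp_rw [mul_sum, ← mul_assoc, hsin]
  rw [sum_Ico_sub_mul_eq (fun k : ℕ => -cos ((k - 1 / 2) * x)) b hmN]
  have hterm (k : ℕ) : -cos ((↑(k + 1) - 1 / 2) * x) * (b (k + 1) - b k)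
      = cos ((k + 1 / 2) * x) * (b k - b (k + 1)) := by
    push_cast
    ring_nf
  simp only [hterm]
  ring

theorem abs_sum_Ico_cos_mul_le {x : ℝ} (hx : sin (x / 2) ≠ 0) {d : ℕ → ℝ} {m N : ℕ} (hmN : m ≤ N)
    (hd : AntitoneOn d (Set.Ici m)) (hd0 : 0 ≤ d N) :
    |∑ k ∈ Ico m N, cos ((k + 1 / 2) * x) * d k| ≤ d m / |sin (x / 2)| := by
  have hcos (k : ℕ) : cos ((k + 1 / 2) * x)
      = sin (↑(k + 1) * x) / (2 * sin (x / 2)) - sin (k * x) / (2 * sin (x / 2)) := by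
    rw [← sub_div, eq_div_iff (mul_ne_zero two_ne_zero hx), mul_comm, two_mul_sin_mul_cos]
    push_cast
    ring_nf
    rw [sin_neg]
    ring
  have hbound (k : ℕ) : |sin (k * x) / (2 * sin (x / 2))| ≤ 1 / (2 * |sin (x / 2)|) := by
    rw [abs_div, abs_mul, abs_two]
    exact div_le_div_of_nonneg_right (abs_sin_le_one _) (by positivity)
  simp_rw [hcos]
  refine (abs_sum_Ico_sub_mul_le hbound hmN hd hd0).trans_eq ?_
  field_simp

theorem abs_two_mul_sin_half_mul_sum_sub_le {p x : ℝ} (hp : 0 ≤ p) (hx : sin (x / 2) ≠ 0)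
    {n N : ℕ} (hn : 1 ≤ n) (hnN : n ≤ N) :
    |2 * sin (x / 2) * ∑ k ∈ Icc (n + 1) N, sin (k * x) / (k : ℝ) ^ p
        - cos ((n + 1 / 2) * x) * (n : ℝ) ^ (-p)|
      ≤ p * (1 + 1 / |sin (x / 2)|) * (n : ℝ) ^ (-p - 1) + ((N + 1 : ℕ) : ℝ) ^ (-p) := by
  set b : ℕ → ℝ := fun k => (k : ℝ) ^ (-p)
  have hb0 (k : ℕ) : 0 ≤ b k := rpow_nonneg (Nat.cast_nonneg k) _
  have hd := antitoneOn_natCast_rpow_neg_sub_rpow_neg_succ hp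
  have hd0 {k : ℕ} (hk : 1 ≤ k) : 0 ≤ b k - b (k + 1) := by
    simpa [b] using rpow_neg_sub_rpow_neg_add_one_nonneg hp (a := k) (by positivity)
  have hdn : b n - b (n + 1) ≤ p * (n : ℝ) ^ (-p - 1) := by
    simpa [b] using rpow_neg_sub_rpow_neg_add_one_le hp (a := n) (by positivity)
  have hdn1 : b (n + 1) - b (n + 1 + 1) ≤ b n - b (n + 1) := hd hn (by simp) (by omega)
  have hsum : ∑ k ∈ Icc (n + 1) N, sin (k * x) / (k : ℝ) ^ p
      = ∑ k ∈ Ico (n + 1) (N + 1), sin (k * x) * b k := by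
    rw [Ico_add_one_right_eq_Icc]
    refine sum_congr rfl fun k _ => ?_
    simp only [b]
    rw [rpow_neg (Nat.cast_nonneg k), div_eq_mul_inv]
  have hhead : |cos ((n + 1 / 2) * x) * (b (n + 1) - b n)| ≤ b n - b (n + 1) := by
    rw [abs_mul, abs_sub_comm, abs_of_nonneg (hd0 hn)]
    exact mul_le_of_le_one_left (hd0 hn) (abs_cos_le_one _)
  have hlast : |cos ((↑(N + 1) - 1 / 2) * x) * b (N + 1)| ≤ b (N + 1) := by
    rw [abs_mul, abs_of_nonneg (hb0 _)]
    exact mul_le_of_le_one_left (hb0 _) (abs_cos_le_one _)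
  have htail := abs_sum_Ico_cos_mul_le hx (d := fun k => b k - b (k + 1)) (by omega : n + 1 ≤ N + 1)
    (hd.mono (Set.Ici_subset_Ici.2 (by omega))) (hd0 (by omega))
  have htail' : (b (n + 1) - b (n + 1 + 1)) / |sin (x / 2)|
      ≤ p * (n : ℝ) ^ (-p - 1) / |sin (x / 2)| :=
    div_le_div_of_nonneg_right (hdn1.trans hdn) (abs_nonneg _)
  have hcast : ((n + 1 : ℕ) : ℝ) - 1 / 2 = n + 1 / 2 := by push_cast; ring
  change |_ - cos _ * b n| ≤ _ + b (N + 1)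
  rw [hsum, two_mul_sin_half_mul_sum_Ico_sin_mul x b (by omega), hcast]
  calc _ = |cos ((n + 1 / 2) * x) * (b (n + 1) - b n) - cos ((↑(N + 1) - 1 / 2) * x) * b (N + 1)
          - ∑ k ∈ Ico (n + 1) (N + 1), cos ((k + 1 / 2) * x) * (b k - b (k + 1))| := by ring_nf
    _ ≤ _ := (abs_sub _ _).trans (add_le_add_left (abs_sub _ _) _)
    _ ≤ p * (n : ℝ) ^ (-p - 1) + p * (n : ℝ) ^ (-p - 1) / |sin (x / 2)| + b (N + 1) := by
      linarith
    _ = _ := by ring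

theorem abs_two_mul_sin_half_mul_sub_le_of_tendsto {p x : ℝ} (hp : 0 < p) (hx : sin (x / 2) ≠ 0)
    {n : ℕ} (hn : 1 ≤ n) {S : ℝ}
    (hS : Tendsto (fun N : ℕ => ∑ k ∈ Icc (n + 1) N, sin (k * x) / (k : ℝ) ^ p) atTop (𝓝 S)) :
    |2 * sin (x / 2) * S - cos ((n + 1 / 2) * x) * (n : ℝ) ^ (-p)|
      ≤ p * (1 + 1 / |sin (x / 2)|) * (n : ℝ) ^ (-p - 1) := by
  have hdecay : Tendsto (fun N : ℕ => ((N + 1 : ℕ) : ℝ) ^ (-p)) atTop (𝓝 0) :=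
    ((tendsto_rpow_neg_atTop hp).comp tendsto_natCast_atTop_atTop).comp (tendsto_add_atTop_nat 1)
  refine le_of_tendsto_of_tendsto ((hS.const_mul _).sub_const _).abs
    (by simpa only [add_zero] using tendsto_const_nhds.add hdecay) ?_
  filter_upwards [eventually_ge_atTop n] with N hN
    using abs_two_mul_sin_half_mul_sum_sub_le hp.le hx hn hN

/-- If `Ψ n` is the limit of the partial sums `∑_{k=n+1}^N sin(kx)/k^{ν+1}`
(i.e. `Ψ n = Ψ_ν^S(x,n)`), with `ν > -1` and `x` not an integer multiple of `2π`, then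
`Ψ n - (cos((n+1/2)x)/(2 sin(x/2))) n^{-ν-1} = O(n^{-ν-2})` as `n → ∞`. -/
theorem stmt_1 (ν x : ℝ) (hν : ν > -1) (hx : ∀ j : ℤ, x ≠ 2 * Real.pi * j)
    (Ψ : ℕ → ℝ)
    (hΨ : ∀ n : ℕ, Filter.Tendsto
      (fun N : ℕ => ∑ k ∈ Finset.Icc (n + 1) N, Real.sin (k * x) / (k : ℝ) ^ (ν + 1))
      Filter.atTop (nhds (Ψ n))) :
    (fun n : ℕ => Ψ n - Real.cos ((n + 1 / 2) * x) / (2 * Real.sin (x / 2)) * (n : ℝ) ^ (-ν - 1))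
      =O[Filter.atTop] (fun n : ℕ => (n : ℝ) ^ (-ν - 2)) := by
  have hs : sin (x / 2) ≠ 0 := by
    rw [Ne, sin_eq_zero_iff]
    rintro ⟨j, hj⟩
    exact hx j (by linarith)
  have hp : 0 < ν + 1 := by linarith
  have hbound : (fun n : ℕ => 2 * sin (x / 2) * Ψ n - cos ((n + 1 / 2) * x) * (n : ℝ) ^ (-ν - 1))
      =O[atTop] (fun n : ℕ => (n : ℝ) ^ (-ν - 2)) := by
    refine IsBigO.of_bound ((ν + 1) * (1 + 1 / |sin (x / 2)|)) ?_
    filter_upwards [eventually_ge_atTop 1] with n hn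
    rw [norm_eq_abs, norm_of_nonneg (by positivity), show -ν - 1 = -(ν + 1) by ring,
      show -ν - 2 = -(ν + 1) - 1 by ring]
    exact abs_two_mul_sin_half_mul_sub_le_of_tendsto hp hs hn (hΨ n)
  refine (hbound.const_mul_left (2 * sin (x / 2))⁻¹).congr_left fun n => ?_
  field_simp
end

section
/- Let ν > 0 and let x ∈ ℝ be an integer multiple of 2π. Then Ψ_ν^S(x,n) = 0 for every n ∈ ℕ, and as n → ∞, Ψ_ν^C(x,n) = n^{−ν}/ν − n^{−ν−1}/2 + O(n^{−ν−2}); i.e., the quantity Ψ_ν^C(x,n) − n^{−ν}/ν + n^{−ν−1}/2 is O(n^{−ν−2}) as n → ∞. -/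
/-!
For `x ∈ 2πℤ` every sine vanishes and every cosine is `1`, so `Ψ^C_ν(x, n)` is the tail
`∑_{k > n} k^{-ν-1}`. Its terms are compared with `∫_k^{k+1} t^{-ν-1} dt` by the trapezoidal rule
for the convex function `f t = t^{-ν-1}`: the chord lies above the graph, and the two tangent lines
at the endpoints (each on its half of `[k, k+1]`) lie below it. The error on `[k, k+1]` is
therefore between `0` and `(f'(k+1) - f'(k))/8`, which telescopes to `(ν+1) n^{-ν-2}/8`.
-/

open Real Filter Asymptotics Set Topology MeasureTheory

lemma intervalIntegral.integral_add_mul_sub (c d p u v : ℝ) :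
    ∫ t in u..v, (c + d * (t - p)) = c * (v - u) + d * ((v - p) ^ 2 - (u - p) ^ 2) / 2 := by
  rw [intervalIntegral.integral_comp_sub_right (fun t => c + d * t),
    intervalIntegral.integral_add intervalIntegrable_const
      ((continuous_const_mul d).intervalIntegrable _ _),
    intervalIntegral.integral_const_mul, integral_id, intervalIntegral.integral_const, smul_eq_mul]
  ring

namespace ConvexOn

variable {S : Set ℝ} {f : ℝ → ℝ} {a b : ℝ}

lemma add_mul_sub_le_of_hasDerivAt {f' x y : ℝ} (hf : ConvexOn ℝ S f) (hx : x ∈ S) (hy : y ∈ S)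
    (hf' : HasDerivAt f f' x) : f x + f' * (y - x) ≤ f y := by
  rcases lt_trichotomy x y with hxy | rfl | hyx
  · have := hf.le_slope_of_hasDerivAt hx hy hxy hf'
    rw [slope_def_field, le_div_iff₀ (sub_pos.2 hxy)] at this
    linarith
  · simp
  · have := hf.slope_le_of_hasDerivAt hy hx hyx hf'
    rw [slope_def_field, div_le_iff₀ (sub_pos.2 hyx)] at this
    linarith

lemma le_add_slope_mul_sub (hf : ConvexOn ℝ S f) (ha : a ∈ S) (hb : b ∈ S) {t : ℝ}
    (ht : t ∈ Icc a b) : f t ≤ f a + slope f a b * (t - a) := by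
  rcases eq_or_lt_of_le ht.1 with rfl | hat
  · simp
  have hsec := hf.secant_mono ha (hf.1.ordConnected.out ha hb ht) hb hat.ne'
    (hat.trans_le ht.2).ne' ht.2
  rw [div_le_iff₀ (sub_pos.2 hat)] at hsec
  rw [slope_def_field]
  linarith

lemma integral_le_trapezoid (hf : ConvexOn ℝ S f) (ha : a ∈ S) (hb : b ∈ S) (hab : a ≤ b)
    (hint : IntervalIntegrable f volume a b) :
    ∫ t in a..b, f t ≤ (b - a) * (f a + f b) / 2 := by
  calc ∫ t in a..b, f t ≤ ∫ t in a..b, (f a + slope f a b * (t - a)) :=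
        intervalIntegral.integral_mono_on hab hint
          (Continuous.intervalIntegrable (by fun_prop) _ _) fun _ => hf.le_add_slope_mul_sub ha hb
    _ = (b - a) * (f a + f b) / 2 := by
        rw [intervalIntegral.integral_add_mul_sub]
        rcases eq_or_lt_of_le hab with rfl | hab
        · simp
        · rw [slope_def_field]
          field_simp
          ring

lemma trapezoid_sub_le_integral {f'a f'b : ℝ} (hf : ConvexOn ℝ S f) (ha : a ∈ S) (hb : b ∈ S)
    (hab : a ≤ b) (hint : IntervalIntegrable f volume a b) (hfa : HasDerivAt f f'a a)
    (hfb : HasDerivAt f f'b b) :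
    (b - a) * (f a + f b) / 2 - (b - a) ^ 2 * (f'b - f'a) / 8 ≤ ∫ t in a..b, f t := by
  set m := (a + b) / 2 with hm
  have ham : a ≤ m := by linarith
  have hmb : m ≤ b := by linarith
  have hmem : ∀ t ∈ Icc a b, t ∈ S := fun t ht => hf.1.ordConnected.out ha hb ht
  have hint_am : IntervalIntegrable f volume a m :=
    hint.mono_set (uIcc_subset_uIcc_left (by simp [uIcc_of_le hab, ham, hmb]))
  have hint_mb : IntervalIntegrable f volume m b :=
    hint.mono_set (uIcc_subset_uIcc_right (by simp [uIcc_of_le hab, ham, hmb]))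
  have h_am : ∫ t in a..m, (f a + f'a * (t - a)) ≤ ∫ t in a..m, f t :=
    intervalIntegral.integral_mono_on ham (Continuous.intervalIntegrable (by fun_prop) _ _)
      hint_am fun t ht => hf.add_mul_sub_le_of_hasDerivAt ha (hmem t ⟨ht.1, ht.2.trans hmb⟩) hfa
  have h_mb : ∫ t in m..b, (f b + f'b * (t - b)) ≤ ∫ t in m..b, f t :=
    intervalIntegral.integral_mono_on hmb (Continuous.intervalIntegrable (by fun_prop) _ _)
      hint_mb fun t ht => hf.add_mul_sub_le_of_hasDerivAt hb (hmem t ⟨ham.trans ht.1, ht.2⟩) hfb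
  rw [intervalIntegral.integral_add_mul_sub] at h_am h_mb
  rw [← intervalIntegral.integral_add_adjacent_intervals hint_am hint_mb, hm]
  rw [hm] at h_am h_mb
  linarith

end ConvexOn

section TrapezoidSums

variable {u F G : ℕ → ℝ} {n : ℕ}

lemma sum_Icc_bounds_of_trapezoid_bounds
    (hlow : ∀ k ≥ n, F k - F (k + 1) ≤ (u k + u (k + 1)) / 2)
    (hup : ∀ k ≥ n, (u k + u (k + 1)) / 2 ≤ F k - F (k + 1) + (G k - G (k + 1)))
    {N : ℕ} (hN : n ≤ N) :
    F n - F N - (u n - u N) / 2 ≤ ∑ k ∈ Finset.Icc (n + 1) N, u k ∧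
      ∑ k ∈ Finset.Icc (n + 1) N, u k ≤ F n - F N - (u n - u N) / 2 + (G n - G N) := by
  induction N, hN using Nat.le_induction with
  | base => simp
  | succ N hnN ih =>
    rw [Finset.sum_Icc_succ_top (by omega)]
    have := hlow N hnN
    have := hup N hnN
    constructor <;> linarith [ih.1, ih.2]

lemma abs_tail_sub_le_of_trapezoid_bounds {L : ℝ}
    (hlow : ∀ k ≥ n, F k - F (k + 1) ≤ (u k + u (k + 1)) / 2)
    (hup : ∀ k ≥ n, (u k + u (k + 1)) / 2 ≤ F k - F (k + 1) + (G k - G (k + 1)))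
    (hu : Tendsto u atTop (𝓝 0)) (hF : Tendsto F atTop (𝓝 0)) (hG : Tendsto G atTop (𝓝 0))
    (hL : Tendsto (fun N => ∑ k ∈ Finset.Icc (n + 1) N, u k) atTop (𝓝 L)) :
    |L - F n + u n / 2| ≤ G n := by
  have hlim : Tendsto (fun N => F n - F N - (u n - u N) / 2) atTop (𝓝 (F n - u n / 2)) := by
    simpa using (tendsto_const_nhds.sub hF).sub ((tendsto_const_nhds.sub hu).div_const 2)
  have hlim' : Tendsto (fun N => F n - F N - (u n - u N) / 2 + (G n - G N)) atTop
      (𝓝 (F n - u n / 2 + G n)) := by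
    simpa using hlim.add (tendsto_const_nhds.sub hG)
  have hbounds := eventually_atTop.2 ⟨n, fun N hN =>
    sum_Icc_bounds_of_trapezoid_bounds hlow hup hN⟩
  have h₁ := le_of_tendsto_of_tendsto hlim hL (hbounds.mono fun _ h => h.1)
  have h₂ := le_of_tendsto_of_tendsto hL hlim' (hbounds.mono fun _ h => h.2)
  rw [abs_le]
  constructor <;> linarith

end TrapezoidSums

lemma convexOn_rpow_of_nonpos {p : ℝ} (hp : p ≤ 0) : ConvexOn ℝ (Ioi 0) fun t : ℝ => t ^ p := by
  have hlog : ConvexOn ℝ (Ioi 0) fun t => p * log t :=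
    (strictConcaveOn_log_Ioi.concaveOn.smul (neg_nonneg.2 hp)).neg.congr fun t _ => by
      simp [smul_eq_mul]
  have himage : Convex ℝ ((fun t => p * log t) '' Ioi 0) :=
    (isPreconnected_Ioi.image _ (by fun_prop (disch := simp_all [ne_of_gt]))).ordConnected.convex
  refine ((convexOn_exp.subset (subset_univ _) himage).comp hlog
    (exp_monotone.monotoneOn _)).congr fun t ht => ?_
  simp [rpow_def_of_pos ht, mul_comm]

lemma integral_rpow_neg_sub_one {ν a b : ℝ} (hν : ν ≠ 0) (ha : 0 < a) (hb : 0 < b) :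
    ∫ t in a..b, t ^ (-ν - 1) = (a ^ (-ν) - b ^ (-ν)) / ν := by
  rw [integral_rpow (Or.inr ⟨by intro h; apply hν; linarith, notMem_uIcc_of_lt ha hb⟩),
    sub_add_cancel, div_neg, ← neg_div, neg_sub]

lemma rpow_neg_sub_one_trapezoid_bounds {ν a : ℝ} (hν : 0 < ν) (ha : 0 < a) :
    (a ^ (-ν) - (a + 1) ^ (-ν)) / ν ≤ (a ^ (-ν - 1) + (a + 1) ^ (-ν - 1)) / 2 ∧
      (a ^ (-ν - 1) + (a + 1) ^ (-ν - 1)) / 2 ≤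
        (a ^ (-ν) - (a + 1) ^ (-ν)) / ν + (ν + 1) / 8 * (a ^ (-ν - 2) - (a + 1) ^ (-ν - 2)) := by
  have ha' : 0 < a + 1 := by linarith
  have hconv := convexOn_rpow_of_nonpos (p := -ν - 1) (by linarith)
  have hint : IntervalIntegrable (fun t : ℝ => t ^ (-ν - 1)) volume a (a + 1) :=
    intervalIntegral.intervalIntegrable_rpow (Or.inr (notMem_uIcc_of_lt ha ha'))
  have hderiv (t : ℝ) (ht : 0 < t) :
      HasDerivAt (fun t : ℝ => t ^ (-ν - 1)) ((-ν - 1) * t ^ (-ν - 2)) t := by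
    convert hasDerivAt_rpow_const (p := -ν - 1) (Or.inl ht.ne') using 3
    ring
  have hup := hconv.integral_le_trapezoid ha ha' (by linarith) hint
  have hlow := hconv.trapezoid_sub_le_integral ha ha' (by linarith) hint (hderiv a ha)
    (hderiv _ ha')
  rw [integral_rpow_neg_sub_one hν.ne' ha ha'] at hup hlow
  constructor <;> linarith

lemma abs_tendsto_sum_rpow_neg_sub_one_sub_le {ν L : ℝ} (hν : 0 < ν) {n : ℕ} (hn : 1 ≤ n)
    (hL : Tendsto (fun N => ∑ k ∈ Finset.Icc (n + 1) N, (k : ℝ) ^ (-ν - 1)) atTop (𝓝 L)) :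
    |L - (n : ℝ) ^ (-ν) / ν + (n : ℝ) ^ (-ν - 1) / 2| ≤ (ν + 1) / 8 * (n : ℝ) ^ (-ν - 2) := by
  have hzero {p : ℝ} (hp : p < 0) : Tendsto (fun k : ℕ => (k : ℝ) ^ p) atTop (𝓝 0) := by
    simpa [Function.comp_def] using
      (tendsto_rpow_neg_atTop (neg_pos.2 hp)).comp tendsto_natCast_atTop_atTop
  have hterm (k : ℕ) (hk : k ≥ n) :=
    rpow_neg_sub_one_trapezoid_bounds hν (a := k) (by exact_mod_cast hn.trans hk)
  exact abs_tail_sub_le_of_trapezoid_bounds (u := fun k : ℕ => (k : ℝ) ^ (-ν - 1))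
    (F := fun k : ℕ => (k : ℝ) ^ (-ν) / ν) (G := fun k : ℕ => (ν + 1) / 8 * (k : ℝ) ^ (-ν - 2))
    (fun k hk => by push_cast; linear_combination (hterm k hk).1)
    (fun k hk => by push_cast; linear_combination (hterm k hk).2)
    (hzero (by linarith)) (by simpa using (hzero (neg_neg_of_pos hν)).div_const ν)
    (by simpa using (hzero (p := -ν - 2) (by linarith)).const_mul ((ν + 1) / 8)) hL

/-- Let `ν > 0` and let `x` be an integer multiple of `2π`. If `ΨS n` is the limit of
the partial sums `∑_{k=n+1}^N sin(kx)/k^{ν+1}` and `ΨC n` is the limit of the partial sums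
`∑_{k=n+1}^N cos(kx)/k^{ν+1}`, then `ΨS n = 0` for every `n`, and
`ΨC n - n^{-ν}/ν + n^{-ν-1}/2 = O(n^{-ν-2})` as `n → ∞`. -/
theorem stmt_2 (ν x : ℝ) (hν : ν > 0) (hx : ∃ j : ℤ, x = 2 * Real.pi * j)
    (ΨC ΨS : ℕ → ℝ)
    (hΨC : ∀ n : ℕ, Filter.Tendsto
      (fun N : ℕ => ∑ k ∈ Finset.Icc (n + 1) N, Real.cos (k * x) / (k : ℝ) ^ (ν + 1))
      Filter.atTop (nhds (ΨC n)))
    (hΨS : ∀ n : ℕ, Filter.Tendsto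
      (fun N : ℕ => ∑ k ∈ Finset.Icc (n + 1) N, Real.sin (k * x) / (k : ℝ) ^ (ν + 1))
      Filter.atTop (nhds (ΨS n))) :
    (∀ n : ℕ, ΨS n = 0) ∧
    (fun n : ℕ => ΨC n - (n : ℝ) ^ (-ν) / ν + (n : ℝ) ^ (-ν - 1) / 2)
      =O[Filter.atTop] (fun n : ℕ => (n : ℝ) ^ (-ν - 2)) := by
  obtain ⟨j, rfl⟩ := hx
  have hsin (k : ℕ) : sin (k * (2 * π * j)) = 0 := by
    rw [show (k : ℝ) * (2 * π * j) = (2 * k * j : ℤ) * π by push_cast; ring, sin_int_mul_pi]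
  have hcos (k : ℕ) : cos (k * (2 * π * j)) / (k : ℝ) ^ (ν + 1) = (k : ℝ) ^ (-ν - 1) := by
    rw [show (k : ℝ) * (2 * π * j) = (k * j : ℤ) * (2 * π) by push_cast; ring,
      cos_int_mul_two_pi, one_div, ← rpow_neg k.cast_nonneg, neg_add']
  refine ⟨fun n => tendsto_nhds_unique (hΨS n) (by simp [hsin]), ?_⟩
  refine IsBigO.of_bound ((ν + 1) / 8) ?_
  filter_upwards [eventually_ge_atTop 1] with n hn
  rw [Real.norm_eq_abs, Real.norm_eq_abs, abs_of_nonneg (rpow_nonneg n.cast_nonneg _)]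
  exact abs_tendsto_sum_rpow_neg_sub_one_sub_le hν hn (by simpa only [hcos] using hΨC n)
end
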